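/- Let λ = (λ₁, λ₂, λ₃) be a three-row partition with λ₁ ≥ λ₂ ≥ λ₃ ≥ 1, and let SG_L denote the Sprague–Grundy value of the LCTR game. (1) If λ₁ = λ₂ = λ₃, then SG_L(λ) = 0 if λ₃ ≥ 3 is odd; SG_L(λ) = 1 if λ₃ = 1 or (λ₃ ≥ 4 is even); SG_L(λ) = 2 if λ₃ = 2. (2) If λ₁ > λ₂ = λ₃, then SG_L(λ) = 0 if λ₃ is odd and 1 if λ₃ is even. (3) If λ₁ = λ₂ > λ₃, then SG_L(λ) = 0 if λ₃ is even and 1 if λ₃ is odd. (4) If λ₁ > λ₂ > λ₃ = 1, then SG_L(λ) = 1 if λ₂ is even and 2 if λ₂ is odd. (5) If λ₁ > λ₂ > λ₃ > 1, then SG_L(λ) = 0 if λ₃ is even and 1 if λ₃ is odd. -/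

import Mathlib

/-- The subpartition `λ[i,j]`: drop the first `i` rows, subtract `j` from each
remaining row, and delete all nonpositive entries. -/
def Subpart (l : List ℕ) (i j : ℕ) : List ℕ :=
  ((l.drop i).map (fun x => x - j)).filter (fun x => x ≠ 0)

/-- A partition: a nonincreasing finite list of positive integers. -/
def IsPartition (l : List ℕ) : Prop :=
  l.Pairwise (· ≥ ·) ∧ ∀ x ∈ l, 0 < x

/-- Minimum excluded value of a finite set of naturals. -/
noncomputable def mex (s : Finset ℕ) : ℕ := sInf {n : ℕ | n ∉ s}

lemma measure_filter_le (l : List ℕ) :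
    (l.filter (fun x => x ≠ 0)).sum + (l.filter (fun x => x ≠ 0)).length
      ≤ l.sum + l.length := by
  induction l with
  | nil => simp
  | cons a t ih =>
    simp only [List.filter_cons, decide_eq_true_eq, List.sum_cons, List.length_cons]
    by_cases h : a ≠ 0
    · rw [if_pos h]
      simp only [List.sum_cons, List.length_cons]
      omega
    · rw [if_neg h]
      omega

lemma measure_mapsub_le (l : List ℕ) :
    ((l.map (fun x => x - 1)).filter (fun x => x ≠ 0)).sum
      + ((l.map (fun x => x - 1)).filter (fun x => x ≠ 0)).length ≤ l.sum := by
  induction l with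
  | nil => simp
  | cons a t ih =>
    simp only [List.map_cons, List.filter_cons, decide_eq_true_eq, List.sum_cons]
    by_cases h : a - 1 ≠ 0
    · rw [if_pos h]
      simp only [List.sum_cons, List.length_cons]
      omega
    · rw [if_neg h]
      omega

lemma subpart10_lt (a : ℕ) (t : List ℕ) :
    (Subpart (a :: t) 1 0).sum + (Subpart (a :: t) 1 0).length
      < (a :: t).sum + (a :: t).length := by
  have h : Subpart (a :: t) 1 0 = t.filter (fun x => x ≠ 0) := by
    simp [Subpart]
  rw [h]
  have := measure_filter_le t
  simp only [List.sum_cons, List.length_cons]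
  omega

lemma subpart01_lt (a : ℕ) (t : List ℕ) :
    (Subpart (a :: t) 0 1).sum + (Subpart (a :: t) 0 1).length
      < (a :: t).sum + (a :: t).length := by
  have h : Subpart (a :: t) 0 1
      = ((a :: t).map (fun x => x - 1)).filter (fun x => x ≠ 0) := by
    simp [Subpart]
  rw [h]
  have := measure_mapsub_le (a :: t)
  have hlen : 0 < (a :: t).length := by simp
  omega

/-- Sprague–Grundy values of the LCTR game. -/
noncomputable def SGL : List ℕ → ℕ
  | [] => 0
  | a :: t => mex {SGL (Subpart (a :: t) 1 0), SGL (Subpart (a :: t) 0 1)}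
  termination_by l => l.sum + l.length
  decreasing_by
  · exact subpart10_lt a t
  · exact subpart01_lt a t

/-- Sprague–Grundy values of the Downright game (only meaningful on nonempty
partitions; the value on `[]` is a junk value). -/
noncomputable def SGD : List ℕ → ℕ
  | [] => 0
  | a :: t =>
      mex ((if t = [] then (∅ : Finset ℕ) else {SGD (Subpart (a :: t) 1 0)}) ∪
           (if a ≤ 1 then (∅ : Finset ℕ) else {SGD (Subpart (a :: t) 0 1)}))
  termination_by l => l.sum + l.length
  decreasing_by
  · exact subpart10_lt a t
  · exact subpart01_lt a t

/-- Durfee length: the largest `ℓ` with `λ_ℓ ≥ ℓ`. -/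
def durfee (l : List ℕ) : ℕ :=
  Nat.findGreatest (fun k => k ≤ l.getD (k - 1) 0) l.length

/-- The conjugate partition. -/
def conj (l : List ℕ) : List ℕ :=
  (List.range (l.headD 0)).map (fun i => (l.filter (fun x => i + 1 ≤ x)).length)

/-- P-positions of misère LCTR. -/
def PmLCTR : List ℕ → Prop
  | [] => False
  | a :: t => ¬ PmLCTR (Subpart (a :: t) 1 0) ∧ ¬ PmLCTR (Subpart (a :: t) 0 1)
  termination_by l => l.sum + l.length
  decreasing_by
  · exact subpart10_lt a t
  · exact subpart01_lt a t

/-- Number of nodes in the game tree of LCTR. -/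
def nodesL : List ℕ → ℕ
  | [] => 1
  | a :: t => 1 + nodesL (Subpart (a :: t) 1 0) + nodesL (Subpart (a :: t) 0 1)
  termination_by l => l.sum + l.length
  decreasing_by
  · exact subpart10_lt a t
  · exact subpart01_lt a t

/-- Number of leaves in the game tree of LCTR. -/
def leavesL : List ℕ → ℕ
  | [] => 1
  | a :: t => leavesL (Subpart (a :: t) 1 0) + leavesL (Subpart (a :: t) 0 1)
  termination_by l => l.sum + l.length
  decreasing_by
  · exact subpart10_lt a t
  · exact subpart01_lt a t

/-- Number of nodes in the game tree of Downright (junk value `0` on `[]`). -/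
def nodesD : List ℕ → ℕ
  | [] => 0
  | a :: t =>
      1 + (if t = [] then 0 else nodesD (Subpart (a :: t) 1 0))
        + (if a ≤ 1 then 0 else nodesD (Subpart (a :: t) 0 1))
  termination_by l => l.sum + l.length
  decreasing_by
  · exact subpart10_lt a t
  · exact subpart01_lt a t

/-- Number of leaves in the game tree of Downright (junk value `0` on `[]`). -/
def leavesD : List ℕ → ℕ
  | [] => 0
  | a :: t =>
      if t = [] ∧ a ≤ 1 then 1
      else (if t = [] then 0 else leavesD (Subpart (a :: t) 1 0))
        + (if a ≤ 1 then 0 else leavesD (Subpart (a :: t) 0 1))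
  termination_by l => l.sum + l.length
  decreasing_by
  · exact subpart10_lt a t
  · exact subpart01_lt a t

/-- The staircase partition `(n, n-1, …, 1)`. -/
def staircase (n : ℕ) : List ℕ := (List.range n).map (fun k => n - k)

/-- The gamma partition `Γ_{r,c} = (c, 1, …, 1)` with `r` parts. -/
def gammaPart (r c : ℕ) : List ℕ := c :: List.replicate (r - 1) 1

/-- The rectangular partition `R_{r,c} = (c, …, c)` with `r` parts. -/
def rectPart (r c : ℕ) : List ℕ := List.replicate r c

lemma mex_eq (s : Finset ℕ) (k : ℕ) (h1 : ∀ m < k, m ∈ s) (h2 : k ∉ s) : mex s = k := by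
  refine le_antisymm (Nat.sInf_le h2) ?_
  by_contra h
  push_neg at h
  have hmem := Nat.sInf_mem (⟨k, h2⟩ : {n : ℕ | n ∉ s}.Nonempty)
  exact hmem (h1 _ h)

lemma mem_pair_iff (k x y : ℕ) : k ∈ ({x, y} : Finset ℕ) ↔ k = x ∨ k = y := by
  simp

lemma mex_pair (x y : ℕ) :
    mex {x, y} = if x ≠ 0 ∧ y ≠ 0 then 0 else if x ≠ 1 ∧ y ≠ 1 then 1 else 2 := by
  split_ifs with h1 h2
  · exact mex_eq _ 0 (by omega) (by rw [mem_pair_iff]; omega)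
  · refine mex_eq _ 1 (fun m hm => ?_) (by rw [mem_pair_iff]; omega)
    rw [mem_pair_iff]; omega
  · refine mex_eq _ 2 (fun m hm => ?_) (by rw [mem_pair_iff]; omega)
    rw [mem_pair_iff]; omega

lemma sg_nil : SGL [] = 0 := by rw [SGL]

def f1 (n : ℕ) : ℕ := if n % 2 = 1 then 1 else 2

def f2 (a b : ℕ) : ℕ :=
  if a = b then (if a % 2 = 1 then 2 else 0) else (if b % 2 = 1 then 0 else 1)

def f3 (a b c : ℕ) : ℕ :=
  if a = b ∧ b = c then (if c = 1 then 1 else if c = 2 then 2 else if c % 2 = 1 then 0 else 1)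
  else if b = c then (if c % 2 = 1 then 0 else 1)
  else if a = b then (if c % 2 = 0 then 0 else 1)
  else if c = 1 then (if b % 2 = 0 then 1 else 2)
  else if c % 2 = 0 then 0 else 1

lemma f1_spec (n : ℕ) : (n % 2 = 1 ∧ f1 n = 1) ∨ (n % 2 = 0 ∧ f1 n = 2) := by
  simp only [f1]; split_ifs <;> omega

lemma f2_spec (a b : ℕ) :
    (a = b ∧ a % 2 = 1 ∧ f2 a b = 2) ∨ (a = b ∧ a % 2 = 0 ∧ f2 a b = 0) ∨
    (a ≠ b ∧ b % 2 = 1 ∧ f2 a b = 0) ∨ (a ≠ b ∧ b % 2 = 0 ∧ f2 a b = 1) := by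
  simp only [f2]; split_ifs <;> omega

lemma f3_spec (a b c : ℕ) :
    (a = b ∧ b = c ∧ c = 1 ∧ f3 a b c = 1) ∨
    (a = b ∧ b = c ∧ c = 2 ∧ f3 a b c = 2) ∨
    (a = b ∧ b = c ∧ c ≠ 1 ∧ c ≠ 2 ∧ c % 2 = 1 ∧ f3 a b c = 0) ∨
    (a = b ∧ b = c ∧ c ≠ 1 ∧ c ≠ 2 ∧ c % 2 = 0 ∧ f3 a b c = 1) ∨
    (¬(a = b ∧ b = c) ∧ b = c ∧ c % 2 = 1 ∧ f3 a b c = 0) ∨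
    (¬(a = b ∧ b = c) ∧ b = c ∧ c % 2 = 0 ∧ f3 a b c = 1) ∨
    (b ≠ c ∧ a = b ∧ c % 2 = 0 ∧ f3 a b c = 0) ∨
    (b ≠ c ∧ a = b ∧ c % 2 = 1 ∧ f3 a b c = 1) ∨
    (b ≠ c ∧ a ≠ b ∧ c = 1 ∧ b % 2 = 0 ∧ f3 a b c = 1) ∨
    (b ≠ c ∧ a ≠ b ∧ c = 1 ∧ b % 2 = 1 ∧ f3 a b c = 2) ∨
    (b ≠ c ∧ a ≠ b ∧ c ≠ 1 ∧ c % 2 = 0 ∧ f3 a b c = 0) ∨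
    (b ≠ c ∧ a ≠ b ∧ c ≠ 1 ∧ c % 2 = 1 ∧ f3 a b c = 1) := by
  simp only [f3]
  by_cases h1 : a = b ∧ b = c
  · simp only [if_pos h1]
    by_cases h2 : c = 1
    · simp only [if_pos h2]
      exact Or.inl ⟨h1.1, h1.2, h2, trivial⟩
    · simp only [if_neg h2]
      by_cases h3 : c = 2
      · simp only [if_pos h3]
        exact Or.inr (Or.inl ⟨h1.1, h1.2, h3, trivial⟩)
      · simp only [if_neg h3]
        by_cases h4 : c % 2 = 1
        · simp only [if_pos h4]
          exact Or.inr (Or.inr (Or.inl ⟨h1.1, h1.2, h2, h3, h4, trivial⟩))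
        · simp only [if_neg h4]
          exact Or.inr (Or.inr (Or.inr (Or.inl ⟨h1.1, h1.2, h2, h3, by omega, trivial⟩)))
  · simp only [if_neg h1]
    by_cases h2 : b = c
    · simp only [if_pos h2]
      by_cases h3 : c % 2 = 1
      · simp only [if_pos h3]
        exact Or.inr (Or.inr (Or.inr (Or.inr (Or.inl ⟨h1, h2, h3, trivial⟩))))
      · simp only [if_neg h3]
        exact Or.inr (Or.inr (Or.inr (Or.inr (Or.inr (Or.inl ⟨h1, h2, by omega, trivial⟩)))))
    · simp only [if_neg h2]
      by_cases h3 : a = b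
      · simp only [if_pos h3]
        by_cases h4 : c % 2 = 0
        · simp only [if_pos h4]
          exact Or.inr (Or.inr (Or.inr (Or.inr (Or.inr (Or.inr (Or.inl ⟨h2, h3, h4, trivial⟩))))))
        · simp only [if_neg h4]
          exact Or.inr (Or.inr (Or.inr (Or.inr (Or.inr (Or.inr (Or.inr (Or.inl ⟨h2, h3, by omega, trivial⟩)))))))
      · simp only [if_neg h3]
        by_cases h4 : c = 1
        · simp only [if_pos h4]
          by_cases h5 : b % 2 = 0
          · simp only [if_pos h5]
            exact Or.inr (Or.inr (Or.inr (Or.inr (Or.inr (Or.inr (Or.inr (Or.inr (Or.inl ⟨h2, h3, h4, h5, trivial⟩))))))))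
          · simp only [if_neg h5]
            exact Or.inr (Or.inr (Or.inr (Or.inr (Or.inr (Or.inr (Or.inr (Or.inr (Or.inr (Or.inl ⟨h2, h3, h4, by omega, trivial⟩)))))))))
        · simp only [if_neg h4]
          by_cases h5 : c % 2 = 0
          · simp only [if_pos h5]
            exact Or.inr (Or.inr (Or.inr (Or.inr (Or.inr (Or.inr (Or.inr (Or.inr (Or.inr (Or.inr (Or.inl ⟨h2, h3, h4, h5, trivial⟩))))))))))
          · simp only [if_neg h5]
            exact Or.inr (Or.inr (Or.inr (Or.inr (Or.inr (Or.inr (Or.inr (Or.inr (Or.inr (Or.inr (Or.inr ⟨h2, h3, h4, by omega, trivial⟩))))))))))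

lemma sg1 : ∀ n : ℕ, 1 ≤ n → SGL [n] = f1 n := by
  intro n
  induction n with
  | zero => omega
  | succ n ih =>
    intro _
    have h10 : Subpart [n+1] 1 0 = [] := by simp [Subpart]
    have hspec := f1_spec (n+1)
    rcases Nat.eq_zero_or_pos n with h0 | hpos
    · subst h0
      have h01 : Subpart [1] 0 1 = [] := by simp [Subpart]
      rw [SGL, h10, h01, sg_nil, mex_pair]
      set Z := f1 1
      split_ifs <;> omega
    · have h01 : Subpart [n+1] 0 1 = [n] := by
        have hn : n ≠ 0 := by omega
        simp [Subpart, hn]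
      have hspec2 := f1_spec n
      rw [SGL, h10, h01, sg_nil, ih hpos, mex_pair]
      set Y := f1 n
      set Z := f1 (n+1)
      split_ifs <;> omega

lemma sg2 : ∀ b a : ℕ, 1 ≤ b → b ≤ a → SGL [a, b] = f2 a b := by
  intro b
  induction b with
  | zero => omega
  | succ b ih =>
    intro a _ hba
    have h10 : Subpart [a, b+1] 1 0 = [b+1] := by simp [Subpart]
    have hX := f1_spec (b+1)
    have hZ := f2_spec a (b+1)
    rw [SGL, h10, sg1 (b+1) (by omega)]
    rcases Nat.eq_zero_or_pos b with h0 | hpos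
    · subst h0
      rcases Nat.eq_or_lt_of_le hba with ha1 | ha2
      · have ha1 : a = 1 := ha1.symm
        subst ha1
        have h01 : Subpart [1, 1] 0 1 = [] := by simp [Subpart]
        rw [h01, sg_nil, mex_pair]
        set X := f1 1
        set Z := f2 1 1
        split_ifs <;> omega
      · have h01 : Subpart [a, 1] 0 1 = [a-1] := by
          have ha : a - 1 ≠ 0 := by omega
          simp [Subpart, ha]
        have hY := f1_spec (a-1)
        rw [h01, sg1 (a-1) (by omega), mex_pair]
        set X := f1 1
        set Y := f1 (a-1)
        set Z := f2 a 1
        split_ifs <;> omega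
    · have h01 : Subpart [a, b+1] 0 1 = [a-1, b] := by
        have ha : a - 1 ≠ 0 := by omega
        have hb : b ≠ 0 := by omega
        simp [Subpart, ha, hb]
      have hY := f2_spec (a-1) b
      rw [h01, ih (a-1) hpos (by omega), mex_pair]
      set X := f1 (b+1)
      set Y := f2 (a-1) b
      set Z := f2 a (b+1)
      split_ifs <;> omega

lemma sg3 : ∀ c a b : ℕ, 1 ≤ c → c ≤ b → b ≤ a → SGL [a, b, c] = f3 a b c := by
  intro c
  induction c with
  | zero => omega
  | succ c ih =>
    intro a b _ hcb hba
    have h10 : Subpart [a, b, c+1] 1 0 = [b, c+1] := by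
      have hb : b ≠ 0 := by omega
      simp [Subpart, hb]
    have hX := f2_spec b (c+1)
    have hZ := f3_spec a b (c+1)
    rw [SGL, h10, sg2 (c+1) b (by omega) hcb]
    rcases Nat.eq_zero_or_pos c with h0 | hpos
    · subst h0
      rcases Nat.eq_or_lt_of_le hcb with hb1 | hb2
      · have hb1 : b = 1 := hb1.symm
        subst hb1
        rcases Nat.eq_or_lt_of_le hba with ha1 | ha2
        · have ha1 : a = 1 := ha1.symm
          subst ha1
          have h01 : Subpart [1, 1, 1] 0 1 = [] := by simp [Subpart]
          rw [h01, sg_nil, mex_pair]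
          set X := f2 1 1
          set Z := f3 1 1 1
          split_ifs <;> omega
        · have h01 : Subpart [a, 1, 1] 0 1 = [a-1] := by
            have ha : a - 1 ≠ 0 := by omega
            simp [Subpart, ha]
          have hY := f1_spec (a-1)
          rw [h01, sg1 (a-1) (by omega), mex_pair]
          set X := f2 1 1
          set Y := f1 (a-1)
          set Z := f3 a 1 1
          split_ifs <;> omega
      · have h01 : Subpart [a, b, 1] 0 1 = [a-1, b-1] := by
          have ha : a - 1 ≠ 0 := by omega
          have hb : b - 1 ≠ 0 := by omega
          simp [Subpart, ha, hb]
        have hY := f2_spec (a-1) (b-1)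
        rw [h01, sg2 (b-1) (a-1) (by omega) (by omega), mex_pair]
        set X := f2 b 1
        set Y := f2 (a-1) (b-1)
        set Z := f3 a b 1
        split_ifs <;> omega
    · have h01 : Subpart [a, b, c+1] 0 1 = [a-1, b-1, c] := by
        have ha : a - 1 ≠ 0 := by omega
        have hb : b - 1 ≠ 0 := by omega
        have hc : c ≠ 0 := by omega
        simp [Subpart, ha, hb, hc]
      have hY := f3_spec (a-1) (b-1) c
      rw [h01, ih (a-1) (b-1) hpos (by omega) (by omega), mex_pair]
      set X := f2 b (c+1)
      set Y := f3 (a-1) (b-1) c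
      set Z := f3 a b (c+1)
      split_ifs <;> omega

/-- Sprague–Grundy values of three-row LCTR games. -/
theorem stmt11 (a b c : ℕ) (hab : b ≤ a) (hbc : c ≤ b) (hc : 1 ≤ c) :
    (a = b ∧ b = c →
      SGL [a, b, c] =
        if 3 ≤ c ∧ Odd c then 0
        else if c = 1 ∨ (4 ≤ c ∧ Even c) then 1
        else 2) ∧
    (b < a ∧ b = c → SGL [a, b, c] = if Odd c then 0 else 1) ∧
    (a = b ∧ c < b → SGL [a, b, c] = if Even c then 0 else 1) ∧
    (c < b ∧ b < a ∧ c = 1 → SGL [a, b, c] = if Even b then 1 else 2) ∧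
    (c < b ∧ b < a ∧ 1 < c → SGL [a, b, c] = if Even c then 0 else 1) := by
  have h := sg3 c a b hc hbc hab
  have hs := f3_spec a b c
  rw [h]
  set Z := f3 a b c
  simp only [Nat.odd_iff, Nat.even_iff]
  refine ⟨?_, ?_, ?_, ?_, ?_⟩ <;> intro hh <;> split_ifs <;> omega
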